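/- For a vertex x ∈ T of Sp(2ν,2), |N(x) ∩ S_2| = (2/3)|S_2|; in particular neither T nor S_2 is a Godsil–McKay cell of the orbit partition {S, T, S_0\(S∪T), S_2, S_4}. -/

import Mathlib

open Finset

abbrev F2 := ZMod 2

/-- Vectors in `F_2^{2ν}`, divided into `ν` blocks of length 2. -/
abbrev Vec (ν : ℕ) := Fin ν → Fin 2 → F2

/-- The symplectic form `x^T K y` with `K = I_ν ⊗ R`, `R = [[0,1],[1,0]]`. -/
def sform {ν : ℕ} (x y : Vec ν) : F2 := ∑ l, (x l 0 * y l 1 + x l 1 * y l 0)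

/-- The vertex set of the symplectic graph `Sp(2ν,2)`: nonzero vectors.
Vertices `x, y` are adjacent iff `sform x y = 1`. -/
abbrev Vtx (ν : ℕ) := {x : Vec ν // x ≠ 0}

/-- The weight of a length-2 block. -/
def wt (b : Fin 2 → F2) : ℕ := (univ.filter (fun c => b c ≠ 0)).card

/-- The number of blocks of `x` having weight `w`. -/
def nblk {ν : ℕ} (x : Vec ν) (w : ℕ) : ℕ := (univ.filter (fun l => wt (x l) = w)).card

/-- `x` belongs to the 4-subset `S = {v_1,v_2,v_3,v_4}`. -/
def inS {ν : ℕ} (v : Fin 4 → Vec ν) (x : Vec ν) : Prop := ∃ i, x = v i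

/-- `x` belongs to `T = {v_1+v_2, v_2+v_3, v_3+v_1}`. -/
def inT {ν : ℕ} (v : Fin 4 → Vec ν) (x : Vec ν) : Prop :=
  ∃ i j : Fin 4, i ≠ 3 ∧ j ≠ 3 ∧ i ≠ j ∧ x = v i + v j

/-- The number of indices `j ∈ [4]` with `x^T K v_j = 1`. -/
def cnt {ν : ℕ} (v : Fin 4 → Vec ν) (x : Vec ν) : ℕ :=
  (univ.filter (fun j : Fin 4 => sform x (v j) = 1)).card

instance {ν : ℕ} (v : Fin 4 → Vec ν) : DecidablePred (inS v) := fun _ =>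
  inferInstanceAs (Decidable (∃ _, _))

instance {ν : ℕ} (v : Fin 4 → Vec ν) : DecidablePred (inT v) := fun _ =>
  inferInstanceAs (Decidable (∃ _, _))

/-- The set `S` as a finset of vertices. -/
def Sfin {ν : ℕ} (v : Fin 4 → Vec ν) : Finset (Vtx ν) := univ.filter (fun x => inS v x.1)

/-- The set `T` as a finset of vertices. -/
def Tfin {ν : ℕ} (v : Fin 4 → Vec ν) : Finset (Vtx ν) := univ.filter (fun x => inT v x.1)

/-- The set `S_i` of vertices `x` with `#{j : x^T K v_j = 1} = i`, as a finset. -/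
def Sifin {ν : ℕ} (v : Fin 4 → Vec ν) (i : ℕ) : Finset (Vtx ν) :=
  univ.filter (fun x => cnt v x.1 = i)

/-- The set `S_0 \ (S ∪ T)` as a finset of vertices. -/
def S0'fin {ν : ℕ} (v : Fin 4 → Vec ν) : Finset (Vtx ν) :=
  univ.filter (fun x => cnt v x.1 = 0 ∧ ¬ inS v x.1 ∧ ¬ inT v x.1)

/-- The number of neighbors of the vertex `x` inside the finset `C`. -/
def nbc {ν : ℕ} (x : Vtx ν) (C : Finset (Vtx ν)) : ℕ :=
  (C.filter (fun y => sform x.1 y.1 = 1)).card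

/-- The standing hypotheses on the special 4-subset `S = {v_1,v_2,v_3,v_4}`:
all `v_i` are vertices, `v_1,v_2,v_3` are linearly independent and pairwise
(and self) `K`-orthogonal, and `v_4 = v_1 + v_2 + v_3`. -/
structure SConfig (ν : ℕ) (v : Fin 4 → Vec ν) : Prop where
  hne : ∀ i, v i ≠ 0
  hind : LinearIndependent F2 ![v 0, v 1, v 2]
  horth : ∀ i j : Fin 4, i ≠ 3 → j ≠ 3 → sform (v i) (v j) = 0
  hsum : v 3 = v 0 + v 1 + v 2

/-- `D` is a Godsil–McKay cell with respect to the other cells `cells`: every vertex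
of `D` has `0`, half, or all of each cell in `cells` as neighbors. -/
def IsGMCell {ν : ℕ} (cells : List (Finset (Vtx ν))) (D : Finset (Vtx ν)) : Prop :=
  ∀ x ∈ D, ∀ C ∈ cells, nbc x C = 0 ∨ 2 * nbc x C = C.card ∨ nbc x C = C.card

/-! The linear map `x ↦ (sform x (v i))_{i < 3}` is onto `F₂³`, since `v 0, v 1, v 2` are
independent and the form is nondegenerate; so every pattern `t ∈ F₂³` has the same number
`K > 0` of preimages. As `v 3 = v 0 + v 1 + v 2`, the value on `v 3` is the sum of the other
three, so `S_2` consists of the preimages of the 6 patterns whose completion to `F₂⁴` has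
exactly two ones, and `v i + v j ∈ T` is adjacent to such a vertex iff the completed pattern
differs at `i` and `j`, which happens for 4 of the 6. Hence `|N(x) ∩ S_2| = 4K = (2/3) 6K`,
while a vertex of `S_2` with pattern `(1, 0, 0)` is adjacent to exactly 2 of the 3 vertices
of `T`. -/

section SymplecticForm

variable {ν : ℕ}

lemma sform_comm (x y : Vec ν) : sform x y = sform y x := by
  unfold sform; exact Finset.sum_congr rfl fun _ _ => by ring

lemma sform_add_left (a b y : Vec ν) : sform (a + b) y = sform a y + sform b y := by
  simp only [sform, ← Finset.sum_add_distrib, Pi.add_apply]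
  exact Finset.sum_congr rfl fun _ _ => by ring

lemma sform_smul_left (c : F2) (x y : Vec ν) : sform (c • x) y = c * sform x y := by
  simp only [sform, Finset.mul_sum, Pi.smul_apply, smul_eq_mul]
  exact Finset.sum_congr rfl fun _ _ => by ring

lemma sform_add_right (x a b : Vec ν) : sform x (a + b) = sform x a + sform x b := by
  rw [sform_comm, sform_add_left, sform_comm a, sform_comm b]

lemma sform_smul_right (c : F2) (x y : Vec ν) : sform x (c • y) = c * sform x y := by
  rw [sform_comm, sform_smul_left, sform_comm]

lemma sform_single_left (l : Fin ν) (c : Fin 2) (w : Vec ν) :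
    sform (Pi.single l (Pi.single c 1)) w = w l (c + 1) := by
  rw [sform, Finset.sum_eq_single l (fun k _ hk => by simp [hk]) (by simp)]
  fin_cases c <;> simp

lemma eq_zero_of_forall_sform_eq_zero {w : Vec ν} (h : ∀ x, sform x w = 0) : w = 0 := by
  funext l c
  have hc : c + 1 + 1 = c := by fin_cases c <;> rfl
  simpa [sform_single_left, hc] using h (Pi.single l (Pi.single (c + 1) 1))

def sformBilin (ν : ℕ) : LinearMap.BilinForm F2 (Vec ν) :=
  LinearMap.mk₂ F2 sform sform_add_left sform_smul_left sform_add_right sform_smul_right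

def pattern {ι : Type*} (w : ι → Vec ν) : Vec ν →ₗ[F2] ι → F2 :=
  LinearMap.pi fun i => (sformBilin ν).flip (w i)

@[simp]
lemma pattern_apply {ι : Type*} (w : ι → Vec ν) (x : Vec ν) (i : ι) :
    pattern w x i = sform x (w i) := rfl

lemma pattern_surjective {ι : Type*} [Finite ι] {w : ι → Vec ν} (hw : LinearIndependent F2 w) :
    Function.Surjective (pattern w) := by
  have : Fintype ι := Fintype.ofFinite ι
  have hli : LinearIndependent F2 fun i (x : Vec ν) => sform x (w i) := by
    refine Fintype.linearIndependent_iff.mpr fun g hg => Fintype.linearIndependent_iff.mp hw g ?_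
    refine eq_zero_of_forall_sform_eq_zero fun x => ?_
    have hsum : sform x (∑ i, g i • w i) = ∑ i, g i * sform x (w i) := by
      simpa only [sformBilin, LinearMap.mk₂_apply, sform_smul_right]
        using map_sum (sformBilin ν x) (fun i => g i • w i) univ
    simpa [hsum] using congrFun hg x
  have hspan := span_flip_eq_top_iff_linearIndependent.mpr hli
  have hrange :
      Set.range (flip fun i (x : Vec ν) => sform x (w i)) = LinearMap.range (pattern w) :=
    (LinearMap.coe_range (pattern w)).symm
  rwa [hrange, Submodule.span_eq, LinearMap.range_eq_top] at hspan

end SymplecticForm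

lemma card_filter_comp_of_surjective {G M F : Type*} [AddGroup G] [Fintype G] [AddMonoid M]
    [Fintype M] [DecidableEq M] [FunLike F G M] [AddMonoidHomClass F G M] {f : F}
    (hf : Function.Surjective f) (Q : M → Prop) [DecidablePred Q] :
    #{g | Q (f g)} = #{t | Q t} * #{g | f g = 0} := by
  rw [card_eq_sum_card_fiberwise (f := f) (t := {t | Q t}) fun g hg => by simpa using hg,
    ← smul_eq_mul, ← sum_const]
  refine sum_congr rfl fun t ht => ?_
  rw [filter_filter]
  simp only [mem_filter, mem_univ, true_and] at ht
  calc #{g | Q (f g) ∧ f g = t} = #{g | f g = t} :=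
        congrArg card (filter_congr fun g _ => ⟨And.right, fun h => ⟨h ▸ ht, h⟩⟩)
    _ = #{g | f g = 0} :=
        AddMonoidHom.card_fiber_eq_of_mem_range f (hf t) ⟨0, map_zero f⟩

lemma card_filter_vtx {ν : ℕ} (P : Vec ν → Prop) [DecidablePred P] (hP : ¬ P 0) :
    #{x : Vtx ν | P x.1} = #{x | P x} := by
  refine card_bij (fun x _ => x.1) (by simp) (fun _ _ _ _ => Subtype.ext) fun x hx => ?_
  simp only [mem_filter, mem_univ, true_and] at hx
  exact ⟨⟨x, fun h => hP (h ▸ hx)⟩, by simpa using hx, rfl⟩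

section Configuration

def withSum (t : Fin 3 → F2) : Fin 4 → F2 := ![t 0, t 1, t 2, t 0 + t 1 + t 2]

lemma card_withSum_two : #{t : Fin 3 → F2 | #{j | withSum t j = 1} = 2} = 6 := by decide

lemma card_withSum_two_and_add (i j : Fin 4) (hij : i ≠ j) :
    #{t : Fin 3 → F2 | #{k | withSum t k = 1} = 2 ∧ withSum t i + withSum t j = 1} = 4 := by
  revert i j; decide

variable {ν : ℕ} {v : Fin 4 → Vec ν}

lemma sform_eq_withSum (hv : SConfig ν v) (x : Vec ν) (j : Fin 4) :
    sform x (v j) = withSum (pattern ![v 0, v 1, v 2] x) j := by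
  fin_cases j <;> simp [withSum, hv.hsum, sform_add_right]

lemma cnt_eq_card_withSum (hv : SConfig ν v) (x : Vec ν) :
    cnt v x = #{j | withSum (pattern ![v 0, v 1, v 2] x) j = 1} := by
  simp only [cnt, sform_eq_withSum hv]

lemma card_filter_pattern (hv : SConfig ν v) (Q : (Fin 3 → F2) → Prop) [DecidablePred Q]
    (hQ : ¬ Q 0) :
    #{y : Vtx ν | Q (pattern ![v 0, v 1, v 2] y.1)}
      = #{t | Q t} * #{y : Vec ν | pattern ![v 0, v 1, v 2] y = 0} := by
  rw [card_filter_vtx (fun y => Q (pattern ![v 0, v 1, v 2] y)) (by simpa using hQ)]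
  exact card_filter_comp_of_surjective (pattern_surjective hv.hind) Q

lemma card_Sifin_two (hv : SConfig ν v) :
    #(Sifin v 2) = 6 * #{y : Vec ν | pattern ![v 0, v 1, v 2] y = 0} := by
  rw [← card_withSum_two, ← card_filter_pattern hv _ (by decide)]
  exact congrArg card (filter_congr fun y _ => by rw [cnt_eq_card_withSum hv])

lemma nbc_Sifin_two_of_mem_Tfin (hv : SConfig ν v) {x : Vtx ν} (hx : x ∈ Tfin v) :
    nbc x (Sifin v 2) = 4 * #{y : Vec ν | pattern ![v 0, v 1, v 2] y = 0} := by
  obtain ⟨i, j, -, -, hij, hxij⟩ := (mem_filter.mp hx).2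
  calc nbc x (Sifin v 2)
      = #{y : Vtx ν | (fun t => #{k | withSum t k = 1} = 2 ∧ withSum t i + withSum t j = 1)
          (pattern ![v 0, v 1, v 2] y.1)} := by
        rw [nbc, Sifin, filter_filter]
        refine congrArg card (filter_congr fun y _ => ?_)
        rw [cnt_eq_card_withSum hv, hxij, sform_comm, sform_add_right, sform_eq_withSum hv,
          sform_eq_withSum hv]
    _ = _ := (card_filter_pattern hv _ fun h => absurd h.1 (by decide)).trans
      (congrArg (· * _) (card_withSum_two_and_add i j hij))

lemma vec_add_ne_zero {a b : Vec ν} (h : a ≠ b) : a + b ≠ 0 := by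
  have hneg : -b = b := funext fun l => funext fun c => ZMod.neg_eq_self_mod_two (b l c)
  rwa [Ne, add_eq_zero_iff_eq_neg, hneg]

lemma SConfig.v_zero_ne_v_one (hv : SConfig ν v) : v 0 ≠ v 1 :=
  hv.hind.injective.ne (by decide : (0 : Fin 3) ≠ 1)

lemma SConfig.v_one_ne_v_two (hv : SConfig ν v) : v 1 ≠ v 2 :=
  hv.hind.injective.ne (by decide : (1 : Fin 3) ≠ 2)

lemma SConfig.v_zero_ne_v_two (hv : SConfig ν v) : v 0 ≠ v 2 :=
  hv.hind.injective.ne (by decide : (0 : Fin 3) ≠ 2)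

lemma Tfin_eq (hv : SConfig ν v) :
    Tfin v = {⟨v 0 + v 1, vec_add_ne_zero hv.v_zero_ne_v_one⟩,
      ⟨v 1 + v 2, vec_add_ne_zero hv.v_one_ne_v_two⟩,
      ⟨v 0 + v 2, vec_add_ne_zero hv.v_zero_ne_v_two⟩} := by
  ext x
  simp only [Tfin, mem_filter, mem_univ, true_and]
  simp only [inT, mem_insert, mem_singleton, Subtype.ext_iff]
  constructor
  · rintro ⟨i, j, hi, hj, hij, hx⟩
    fin_cases i <;> fin_cases j <;>
      simp_all [add_comm (v 1) (v 0), add_comm (v 2) (v 0), add_comm (v 2) (v 1)]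
  · rintro (h | h | h)
    exacts [⟨0, 1, by decide, by decide, by decide, h⟩,
      ⟨1, 2, by decide, by decide, by decide, h⟩, ⟨0, 2, by decide, by decide, by decide, h⟩]

lemma card_Tfin (hv : SConfig ν v) : #(Tfin v) = 3 := by
  rw [Tfin_eq hv, card_insert_of_notMem, card_pair]
  · simp [Subtype.ext_iff, hv.v_zero_ne_v_one.symm]
  · simp [Subtype.ext_iff, add_comm (v 1) (v 2), hv.v_zero_ne_v_two, hv.v_one_ne_v_two]

lemma exists_mem_Sifin_two_nbc_Tfin_eq_two (hv : SConfig ν v) :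
    ∃ y ∈ Sifin v 2, nbc y (Tfin v) = 2 := by
  obtain ⟨y, hy⟩ := pattern_surjective hv.hind ![1, 0, 0]
  have e0 : sform y (v 0) = 1 := congrFun hy 0
  have e1 : sform y (v 1) = 0 := congrFun hy 1
  have e2 : sform y (v 2) = 0 := congrFun hy 2
  have hy0 : y ≠ 0 := by rintro rfl; simp [sform] at e0
  refine ⟨⟨y, hy0⟩, ?_, ?_⟩
  · simp only [Sifin, mem_filter, mem_univ, true_and, cnt_eq_card_withSum hv, hy]; decide
  · simp only [nbc, Tfin_eq hv, filter_insert, filter_singleton, sform_add_right, e0, e1, e2]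
    norm_num
    exact card_pair (by simp [Subtype.ext_iff, hv.v_one_ne_v_two])

end Configuration

theorem T_not_GMCell_general (ν : ℕ) (v : Fin 4 → Vec ν) (hv : SConfig ν v) :
    (∀ x ∈ Tfin v, 3 * nbc x (Sifin v 2) = 2 * (Sifin v 2).card) ∧
    ¬ IsGMCell [Sfin v, S0'fin v, Sifin v 2, Sifin v 4] (Tfin v) ∧
    ¬ IsGMCell [Sfin v, Tfin v, S0'fin v, Sifin v 4] (Sifin v 2) := by
  have hK : 0 < #{y : Vec ν | pattern ![v 0, v 1, v 2] y = 0} := card_pos.mpr ⟨0, by simp⟩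
  have hS2 := card_Sifin_two hv
  refine ⟨fun x hx => by rw [nbc_Sifin_two_of_mem_Tfin hv hx, hS2]; ring, fun hT => ?_,
    fun hS => ?_⟩
  · obtain ⟨x, hx⟩ : (Tfin v).Nonempty := card_pos.mp (by rw [card_Tfin hv]; norm_num)
    have hnbc := nbc_Sifin_two_of_mem_Tfin hv hx
    rcases hT x hx (Sifin v 2) (by simp) with h | h | h <;> omega
  · obtain ⟨y, hy, hnbc⟩ := exists_mem_Sifin_two_nbc_Tfin_eq_two hv
    have hT := card_Tfin hv
    rcases hS y hy (Tfin v) (by simp) with h | h | h <;> omega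

/-- Every `x ∈ T` is adjacent to exactly two thirds of `S_2`; in particular neither
`T` nor `S_2` is a Godsil–McKay cell of the orbit partition
`{S, T, S_0\(S∪T), S_2, S_4}`. -/
theorem T_not_GMCell (ν : ℕ) (hν : 3 ≤ ν) (v : Fin 4 → Vec ν) (hv : SConfig ν v) :
    (∀ x ∈ Tfin v, 3 * nbc x (Sifin v 2) = 2 * (Sifin v 2).card) ∧
    ¬ IsGMCell [Sfin v, S0'fin v, Sifin v 2, Sifin v 4] (Tfin v) ∧
    ¬ IsGMCell [Sfin v, Tfin v, S0'fin v, Sifin v 4] (Sifin v 2) :=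
  T_not_GMCell_general ν v hv
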